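/- Without any constraints on the d-metric or N-connection, the following distortion coefficients vanish identically: (i) Γ_{jk,l} = L̂^m_{jk} g_{ml} for all h-indices j,k,l ∈ {1,2}; (ii) Γ_{bc,d} = Ĉ^e_{bc} g_{ed} for all v-indices b,c,d ∈ {3,4}; (iii) Γ_{ak,b} = L̂^c_{ak} g_{cb} for all a,b ∈ {3,4}, k ∈ {1,2}. That is, the purely horizontal, purely vertical, and mixed (v-labelled, h-direction) N-adapted coefficients of the Levi–Civita connection coincide with the corresponding canonical d-connection coefficients (part of the distortion Theorem A.1, Γ = Γ̂ + Ẑ with Ẑ^i_{jk} = 0 and Ẑ^a_{bc} = 0). -/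
import Mathlib


/- STATEMENT 7 (part of distortion Theorem A.1): without any constraints, the
purely horizontal, purely vertical and mixed (v-labelled, h-direction)
N-adapted Levi–Civita coefficients coincide with the corresponding canonical
d-connection coefficients: Ẑ^i_{jk} = 0, Ẑ^a_{bc} = 0, and Γ_{ak,b} = L̂^c_{ak} g_{cb}. -/

noncomputable section

abbrev Vec4 := (Fin 2 ⊕ Fin 2) → ℝ

/-- Partial derivative `∂_α f` on ℝ⁴. -/
def pd (α : Fin 2 ⊕ Fin 2) (f : Vec4 → ℝ) (u : Vec4) : ℝ :=
  fderiv ℝ f u (Pi.single α 1)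

/-- N-elongated frame operator `e_i f = ∂_i f − N_i^a ∂_a f`. -/
def eH (N : Fin 2 → Fin 2 → Vec4 → ℝ) (i : Fin 2) (f : Vec4 → ℝ) (u : Vec4) : ℝ :=
  pd (Sum.inl i) f u - ∑ a : Fin 2, N i a u * pd (Sum.inr a) f u

/-- `L̂^i_{jk}`. -/
def Lh (N ghinv gh : Fin 2 → Fin 2 → Vec4 → ℝ) (i j k : Fin 2) (u : Vec4) : ℝ :=
  (1/2) * ∑ r : Fin 2, ghinv i r u *
    (eH N k (gh j r) u + eH N j (gh k r) u - eH N r (gh j k) u)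

/-- `Ĉ^a_{bc}`. -/
def Cv (gvinv gv : Fin 2 → Fin 2 → Vec4 → ℝ) (a b c : Fin 2) (u : Vec4) : ℝ :=
  (1/2) * ∑ d : Fin 2, gvinv a d u *
    (pd (Sum.inr c) (gv b d) u + pd (Sum.inr b) (gv c d) u - pd (Sum.inr d) (gv b c) u)

/-- `L̂^a_{bk}`. -/
def Lv (N gvinv gv : Fin 2 → Fin 2 → Vec4 → ℝ) (a b k : Fin 2) (u : Vec4) : ℝ :=
  pd (Sum.inr b) (N k a) u + (1/2) * ∑ c : Fin 2, gvinv a c u *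
    (eH N k (gv b c) u - (∑ d : Fin 2, gv d c u * pd (Sum.inr b) (N k d) u)
      - (∑ d : Fin 2, gv d b u * pd (Sum.inr c) (N k d) u))

/-- Anholonomy coefficients `W^γ_{αβ}`. -/
def Wco (N : Fin 2 → Fin 2 → Vec4 → ℝ) :
    (Fin 2 ⊕ Fin 2) → (Fin 2 ⊕ Fin 2) → (Fin 2 ⊕ Fin 2) → Vec4 → ℝ
  | Sum.inr a, Sum.inl i, Sum.inl j => fun u => eH N j (N i a) u - eH N i (N j a) u
  | Sum.inr b, Sum.inl i, Sum.inr a => fun u => pd (Sum.inr a) (N i b) u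
  | Sum.inr b, Sum.inr a, Sum.inl i => fun u => -(pd (Sum.inr a) (N i b) u)
  | _, _, _ => fun _ => 0

/-- The block-diagonal d-metric `G_{αβ}`. -/
def Gmat (gh gv : Fin 2 → Fin 2 → Vec4 → ℝ) :
    (Fin 2 ⊕ Fin 2) → (Fin 2 ⊕ Fin 2) → Vec4 → ℝ
  | Sum.inl i, Sum.inl j => gh i j
  | Sum.inr a, Sum.inr b => gv a b
  | _, _ => fun _ => 0

/-- The N-adapted frame operator `e_α`. -/
def eOp (N : Fin 2 → Fin 2 → Vec4 → ℝ) : (Fin 2 ⊕ Fin 2) → (Vec4 → ℝ) → Vec4 → ℝ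
  | Sum.inl i => eH N i
  | Sum.inr a => pd (Sum.inr a)

/-- Levi–Civita coefficients `Γ_{αβ,γ}` (nonholonomic Koszul formula). -/
def Gamlow (N gh gv : Fin 2 → Fin 2 → Vec4 → ℝ) (α β γ : Fin 2 ⊕ Fin 2) (u : Vec4) : ℝ :=
  (1/2) * (eOp N β (Gmat gh gv α γ) u + eOp N α (Gmat gh gv γ β) u
    - eOp N γ (Gmat gh gv β α) u
    + (∑ δ : Fin 2 ⊕ Fin 2, Wco N δ β α u * Gmat gh gv δ γ u)
    - (∑ δ : Fin 2 ⊕ Fin 2, Wco N δ α γ u * Gmat gh gv δ β u)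
    + ∑ δ : Fin 2 ⊕ Fin 2, Wco N δ γ β u * Gmat gh gv δ α u)


/-- Contraction of a half-sum against the metric: `∑_m ((1/2)∑_r gi_{mr} A_r) g_{ml} = (1/2) A_l`. -/
lemma contr (g gi : Fin 2 → Fin 2 → ℝ) (hsym : ∀ i j, g i j = g j i)
    (hinv : ∀ i j, ∑ r : Fin 2, g i r * gi r j = if i = j then 1 else 0)
    (A : Fin 2 → ℝ) (l : Fin 2) :
    ∑ m : Fin 2, ((1/2) * ∑ r : Fin 2, gi m r * A r) * g m l = (1/2) * A l := by
  have h00 := hinv 0 0; have h01 := hinv 0 1; have h10 := hinv 1 0; have h11 := hinv 1 1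
  simp [Fin.sum_univ_two] at h00 h01 h10 h11
  fin_cases l <;> simp only [Fin.sum_univ_two, Fin.mk_zero, Fin.mk_one] <;>
    [linear_combination (1/2) * A 0 * h00 + (1/2) * A 1 * h01
      - ((1/2) * (gi 1 0 * A 0 + gi 1 1 * A 1)) * hsym 0 1;
     linear_combination (1/2) * A 0 * h10 + (1/2) * A 1 * h11
      - ((1/2) * (gi 0 0 * A 0 + gi 0 1 * A 1)) * hsym 1 0]

lemma pd_zero (α : Fin 2 ⊕ Fin 2) (u : Vec4) : pd α (fun _ => 0) u = 0 := by
  simp [pd]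

lemma eOp_zero (N : Fin 2 → Fin 2 → Vec4 → ℝ) (α : Fin 2 ⊕ Fin 2) (u : Vec4) :
    eOp N α (fun _ => 0) u = 0 := by
  cases α <;> simp [eOp, eH, pd_zero]

theorem distortion_vanishing_components
    (N : Fin 2 → Fin 2 → Vec4 → ℝ) (hN : ∀ i a, ContDiff ℝ 1 (N i a))
    (gh ghinv gv gvinv : Fin 2 → Fin 2 → Vec4 → ℝ)
    (hgh : ∀ i j, ContDiff ℝ 1 (gh i j)) (hgv : ∀ a b, ContDiff ℝ 1 (gv a b))
    (hghsym : ∀ i j u, gh i j u = gh j i u) (hgvsym : ∀ a b u, gv a b u = gv b a u)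
    (hghinv : ∀ i j u, ∑ r : Fin 2, gh i r u * ghinv r j u = if i = j then 1 else 0)
    (hghinv' : ∀ i j u, ∑ r : Fin 2, ghinv i r u * gh r j u = if i = j then 1 else 0)
    (hgvinv : ∀ a b u, ∑ c : Fin 2, gv a c u * gvinv c b u = if a = b then 1 else 0)
    (hgvinv' : ∀ a b u, ∑ c : Fin 2, gvinv a c u * gv c b u = if a = b then 1 else 0) :
    -- (i) Γ_{jk,l} = L̂^m_{jk} g_{ml}
    (∀ j k l : Fin 2, ∀ u : Vec4,
      Gamlow N gh gv (Sum.inl j) (Sum.inl k) (Sum.inl l) u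
        = ∑ m : Fin 2, Lh N ghinv gh m j k u * gh m l u) ∧
    -- (ii) Γ_{bc,d} = Ĉ^e_{bc} g_{ed}
    (∀ b c d : Fin 2, ∀ u : Vec4,
      Gamlow N gh gv (Sum.inr b) (Sum.inr c) (Sum.inr d) u
        = ∑ e : Fin 2, Cv gvinv gv e b c u * gv e d u) ∧
    -- (iii) Γ_{ak,b} = L̂^c_{ak} g_{cb}
    (∀ a b k : Fin 2, ∀ u : Vec4,
      Gamlow N gh gv (Sum.inr a) (Sum.inl k) (Sum.inr b) u
        = ∑ c : Fin 2, Lv N gvinv gv c a k u * gv c b u) := by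
  have hghf : ∀ i j, gh i j = gh j i := fun i j => funext (hghsym i j)
  have hgvf : ∀ a b, gv a b = gv b a := fun a b => funext (hgvsym a b)
  refine ⟨fun j k l u => ?_, fun b c d u => ?_, fun a b k u => ?_⟩
  · have key := contr (fun i j => gh i j u) (fun i j => ghinv i j u)
      (fun i j => hghsym i j u) (fun i j => hghinv i j u)
      (fun r => eH N k (gh j r) u + eH N j (gh k r) u - eH N r (gh j k) u) l
    simp only [Lh]
    rw [key]
    simp only [Gamlow, eOp, Gmat, Wco, Fintype.sum_sum_type, Fin.sum_univ_two,
      mul_zero, zero_mul, add_zero, zero_add, sub_zero]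
    rw [hghf l k, hghf k j]
  · have key := contr (fun i j => gv i j u) (fun i j => gvinv i j u)
      (fun i j => hgvsym i j u) (fun i j => hgvinv i j u)
      (fun e => pd (Sum.inr c) (gv b e) u + pd (Sum.inr b) (gv c e) u
        - pd (Sum.inr e) (gv b c) u) d
    simp only [Cv]
    rw [key]
    simp only [Gamlow, eOp, Gmat, Wco, Fintype.sum_sum_type, Fin.sum_univ_two,
      mul_zero, zero_mul, add_zero, zero_add, sub_zero]
    rw [hgvf d c, hgvf c b]
  · have key := contr (fun i j => gv i j u) (fun i j => gvinv i j u)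
      (fun i j => hgvsym i j u) (fun i j => hgvinv i j u)
      (fun e => eH N k (gv a e) u - (∑ d : Fin 2, gv d e u * pd (Sum.inr a) (N k d) u)
        - (∑ d : Fin 2, gv d a u * pd (Sum.inr e) (N k d) u)) b
    have hrhs : (∑ c : Fin 2, Lv N gvinv gv c a k u * gv c b u)
        = (∑ c : Fin 2, pd (Sum.inr a) (N k c) u * gv c b u)
          + (1/2) * (eH N k (gv a b) u
            - (∑ d : Fin 2, gv d b u * pd (Sum.inr a) (N k d) u)
            - (∑ d : Fin 2, gv d a u * pd (Sum.inr b) (N k d) u)) := by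
      rw [← key]
      simp only [Lv, Fin.sum_univ_two]
      ring
    rw [hrhs]
    simp only [Gamlow, eOp, Gmat, Wco, Fintype.sum_sum_type, Fin.sum_univ_two,
      eOp_zero, eH, pd_zero, mul_zero, zero_mul, add_zero, zero_add, sub_zero]
    ring


end
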